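/- Let (A,H,▶,ρ) be a linked pair of bialgebras where A and H are cosemisimple with normal integrals φ_A and φ_H. Then the bismash product A#H is cosemisimple, Φ(a#x) = φ_A(a)φ_H(x) is a normal integral on A#H, and φ_H: H → ℂ is a morphism of right A-comodules, i.e. ∑φ_H(x_H)x_A = φ_H(x)1_A for all x ∈ H. -/

import Mathlib

open scoped TensorProduct
open Coalgebra

noncomputable section

/-- A Sweedler representation of the comultiplication of `x`:
`Δ x = ∑ᵢ x1 i ⊗ x2 i`. -/
def Rep2 {H : Type} [AddCommGroup H] [Module ℂ H] [Coalgebra ℂ H]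
    {ι : Type} (x : H) (s : Finset ι) (x1 x2 : ι → H) : Prop :=
  Coalgebra.comul (R := ℂ) x = ∑ i ∈ s, x1 i ⊗ₜ[ℂ] x2 i

/-- A representation of an element of a tensor product as a finite sum of pure tensors. -/
def TRep {M N : Type} [AddCommGroup M] [Module ℂ M] [AddCommGroup N] [Module ℂ N]
    {ι : Type} (w : M ⊗[ℂ] N) (s : Finset ι) (p : ι → M) (q : ι → N) : Prop :=
  w = ∑ i ∈ s, p i ⊗ₜ[ℂ] q i

/-- The iterated comultiplication `x ↦ ∑ (x₁ ⊗ x₂) ⊗ x₃`. -/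
def comul3 (H : Type) [AddCommGroup H] [Module ℂ H] [Coalgebra ℂ H] :
    H →ₗ[ℂ] (H ⊗[ℂ] H) ⊗[ℂ] H :=
  (LinearMap.rTensor H (Coalgebra.comul (R := ℂ))) ∘ₗ Coalgebra.comul (R := ℂ)

/-- The iterated comultiplication with four output legs. -/
def comul4 (H : Type) [AddCommGroup H] [Module ℂ H] [Coalgebra ℂ H] :
    H →ₗ[ℂ] ((H ⊗[ℂ] H) ⊗[ℂ] H) ⊗[ℂ] H :=
  (LinearMap.rTensor H (comul3 H)) ∘ₗ Coalgebra.comul (R := ℂ)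

/-- The iterated comultiplication with five output legs. -/
def comul5 (H : Type) [AddCommGroup H] [Module ℂ H] [Coalgebra ℂ H] :
    H →ₗ[ℂ] (((H ⊗[ℂ] H) ⊗[ℂ] H) ⊗[ℂ] H) ⊗[ℂ] H :=
  (LinearMap.rTensor H (comul4 H)) ∘ₗ Coalgebra.comul (R := ℂ)

/-- The iterated comultiplication with six output legs. -/
def comul6 (H : Type) [AddCommGroup H] [Module ℂ H] [Coalgebra ℂ H] :
    H →ₗ[ℂ] ((((H ⊗[ℂ] H) ⊗[ℂ] H) ⊗[ℂ] H) ⊗[ℂ] H) ⊗[ℂ] H :=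
  (LinearMap.rTensor H (comul5 H)) ∘ₗ Coalgebra.comul (R := ℂ)

/-- A `*`-structure on a Hopf algebra over `ℂ`: a conjugate-linear involution which is
antimultiplicative and comultiplicative.  Together with the Hopf algebra this is the data of
a `*`-Hopf algebra. -/
structure StarHopf (H : Type) [Ring H] [HopfAlgebra ℂ H] : Type where
  st : H → H
  st_add : ∀ x y : H, st (x + y) = st x + st y
  st_smul : ∀ (c : ℂ) (x : H), st (c • x) = (starRingEnd ℂ) c • st x
  st_invol : ∀ x : H, st (st x) = x
  st_antimul : ∀ x y : H, st (x * y) = st y * st x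
  st_comul : ∀ (x : H) {ι : Type} (s : Finset ι) (x1 x2 : ι → H),
      Rep2 x s x1 x2 →
      Coalgebra.comul (R := ℂ) (st x) = ∑ i ∈ s, st (x1 i) ⊗ₜ[ℂ] st (x2 i)

/-- A right comodule over a Hopf algebra. -/
structure RightComodule (H : Type) [Ring H] [HopfAlgebra ℂ H]
    (V : Type) [AddCommGroup V] [Module ℂ V] : Type where
  ρ : V →ₗ[ℂ] V ⊗[ℂ] H
  counit_cond : ∀ v : V, (TensorProduct.rid ℂ V)
      ((LinearMap.lTensor V (Coalgebra.counit (R := ℂ))) (ρ v)) = v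
  coassoc_cond : ∀ v : V, (LinearMap.rTensor H ρ) (ρ v)
      = (TensorProduct.assoc ℂ V H H).symm
          ((LinearMap.lTensor V (Coalgebra.comul (R := ℂ))) (ρ v))

/-- An inner product: sesquilinear (linear in the first variable), conjugate-symmetric and
positive definite. -/
structure IsInner {V : Type} [AddCommGroup V] [Module ℂ V] (ip : V → V → ℂ) : Prop where
  add_left : ∀ u u' v : V, ip (u + u') v = ip u v + ip u' v
  smul_left : ∀ (c : ℂ) (u v : V), ip (c • u) v = c * ip u v
  conj_symm : ∀ u v : V, ip v u = (starRingEnd ℂ) (ip u v)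
  pos_def : ∀ v : V, v ≠ 0 → 0 < (ip v v).re

/-- The invariance condition `∑ ⟨u₀,v⟩ S(u₁) = ∑ ⟨u,v₀⟩ v₁*` for a sesquilinear form on a
right comodule. -/
def RInvariant {H : Type} [Ring H] [HopfAlgebra ℂ H] (σ : StarHopf H)
    {V : Type} [AddCommGroup V] [Module ℂ V] (c : RightComodule H V)
    (ip : V → V → ℂ) : Prop :=
  ∀ (u v : V) {ι κ : Type} (s : Finset ι) (t : Finset κ)
    (u0 : ι → V) (u1 : ι → H) (v0 : κ → V) (v1 : κ → H),
    TRep (c.ρ u) s u0 u1 → TRep (c.ρ v) t v0 v1 →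
    ∑ i ∈ s, ip (u0 i) v • (HopfAlgebra.antipode (R := ℂ) (u1 i))
      = ∑ j ∈ t, ip u (v0 j) • σ.st (v1 j)

/-- A compact quantum group: a `*`-Hopf algebra such that every right comodule admits an
invariant inner product. -/
def IsCQG (H : Type) [Ring H] [HopfAlgebra ℂ H] (σ : StarHopf H) : Prop :=
  ∀ (V : Type) [AddCommGroup V] [Module ℂ V] (c : RightComodule H V),
    ∃ ip : V → V → ℂ, IsInner ip ∧ RInvariant σ c ip

/-- `φ` is a normal integral on the Hopf algebra `H` (a two-sided integral with `φ(1) = 1`);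
a Hopf algebra is cosemisimple iff it admits a normal integral. -/
def IsNormalIntegral (H : Type) [Ring H] [HopfAlgebra ℂ H] (φ : H →ₗ[ℂ] ℂ) : Prop :=
  φ 1 = 1 ∧
  (∀ (x : H) {ι : Type} (s : Finset ι) (x1 x2 : ι → H), Rep2 x s x1 x2 →
      ∑ i ∈ s, φ (x1 i) • x2 i = φ x • (1 : H)) ∧
  (∀ (x : H) {ι : Type} (s : Finset ι) (x1 x2 : ι → H), Rep2 x s x1 x2 →
      ∑ i ∈ s, φ (x2 i) • x1 i = φ x • (1 : H))

section LinkedPair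

variable (A H : Type) [Ring A] [HopfAlgebra ℂ A] [Ring H] [HopfAlgebra ℂ H]

/-- A linked pair of bialgebras `(A, H, ▶, ρ)` (a cocycle linked pair with trivial cocycle
and cococycle): `A` is a left `H`-module algebra via `tri x a = x ▶ a`, `H` is a right
`A`-comodule coalgebra via `rho = ρ : H → H ⊗ A`, and the compatibility relations hold. -/
structure IsLinkedPair
    (tri : H →ₗ[ℂ] A →ₗ[ℂ] A) (rho : H →ₗ[ℂ] H ⊗[ℂ] A) : Prop where
  -- `A` is a left `H`-module algebra
  tri_one_act : ∀ a : A, tri 1 a = a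
  tri_mul_act : ∀ (x y : H) (a : A), tri (x * y) a = tri x (tri y a)
  tri_one : ∀ x : H, tri x 1 = Coalgebra.counit (R := ℂ) x • (1 : A)
  tri_mul : ∀ (x : H) (a b : A) {ι : Type} (s : Finset ι) (x1 x2 : ι → H),
      Rep2 x s x1 x2 → tri x (a * b) = ∑ i ∈ s, tri (x1 i) a * tri (x2 i) b
  -- `H` is a right `A`-comodule coalgebra
  rho_counit : ∀ (x : H) {ι : Type} (s : Finset ι) (h : ι → H) (c : ι → A),
      TRep (rho x) s h c →
      ∑ i ∈ s, Coalgebra.counit (R := ℂ) (h i) • c i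
        = Coalgebra.counit (R := ℂ) x • (1 : A)
  rho_comul : ∀ (x : H) {ι : Type} (s : Finset ι) (g k : ι → H) (c d : ι → A),
      (TensorProduct.map rho rho) (Coalgebra.comul (R := ℂ) x)
        = ∑ i ∈ s, (g i ⊗ₜ[ℂ] c i) ⊗ₜ[ℂ] (k i ⊗ₜ[ℂ] d i) →
      (LinearMap.rTensor A (Coalgebra.comul (R := ℂ))) (rho x)
        = ∑ i ∈ s, (g i ⊗ₜ[ℂ] k i) ⊗ₜ[ℂ] (c i * d i)
  rho_id : ∀ (x : H) {ι : Type} (s : Finset ι) (h : ι → H) (c : ι → A),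
      TRep (rho x) s h c → ∑ i ∈ s, Coalgebra.counit (R := ℂ) (c i) • h i = x
  rho_coassoc : ∀ x : H,
      (TensorProduct.assoc ℂ H A A) ((LinearMap.rTensor A rho) (rho x))
        = (LinearMap.lTensor H (Coalgebra.comul (R := ℂ) : A →ₗ[ℂ] A ⊗[ℂ] A)) (rho x)
  -- the compatibility relations
  compat_counit : ∀ (x : H) (a : A), Coalgebra.counit (R := ℂ) (tri x a)
      = Coalgebra.counit (R := ℂ) x * Coalgebra.counit (R := ℂ) a
  compat_one : rho 1 = (1 : H) ⊗ₜ[ℂ] (1 : A)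
  compat_comul : ∀ (x : H) (a : A) {ι κ : Type} (s : Finset ι) (t : Finset κ)
      (a1 a2 : ι → A) (g : κ → H) (c : κ → A) (u : κ → H),
      Rep2 a s a1 a2 →
      (TensorProduct.map rho (LinearMap.id : H →ₗ[ℂ] H)) (Coalgebra.comul (R := ℂ) x)
        = ∑ j ∈ t, (g j ⊗ₜ[ℂ] c j) ⊗ₜ[ℂ] u j →
      Coalgebra.comul (R := ℂ) (tri x a)
        = ∑ j ∈ t, ∑ i ∈ s, tri (g j) (a1 i) ⊗ₜ[ℂ] (c j * tri (u j) (a2 i))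
  compat_rho_mul : ∀ (x y : H) {ι κ : Type} (s : Finset ι) (t : Finset κ)
      (g : ι → H) (c : ι → A) (u : ι → H) (k : κ → H) (d : κ → A),
      (TensorProduct.map rho (LinearMap.id : H →ₗ[ℂ] H)) (Coalgebra.comul (R := ℂ) x)
        = ∑ i ∈ s, (g i ⊗ₜ[ℂ] c i) ⊗ₜ[ℂ] u i →
      TRep (rho y) t k d →
      rho (x * y) = ∑ i ∈ s, ∑ j ∈ t, (g i * k j) ⊗ₜ[ℂ] (c i * tri (u i) (d j))
  compat_sym : ∀ (x : H) (a : A) {ι κ : Type} (s : Finset ι) (t : Finset κ)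
      (x1 : ι → H) (h : ι → H) (b : ι → A)
      (g : κ → H) (c : κ → A) (x2 : κ → H),
      (LinearMap.lTensor H rho) (Coalgebra.comul (R := ℂ) x)
        = ∑ i ∈ s, x1 i ⊗ₜ[ℂ] (h i ⊗ₜ[ℂ] b i) →
      (LinearMap.rTensor H rho) (Coalgebra.comul (R := ℂ) x)
        = ∑ j ∈ t, (g j ⊗ₜ[ℂ] c j) ⊗ₜ[ℂ] x2 j →
      ∑ i ∈ s, h i ⊗ₜ[ℂ] (tri (x1 i) a * b i)
        = ∑ j ∈ t, g j ⊗ₜ[ℂ] (c j * tri (x2 j) a)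

/-- `M`, identified with `A ⊗ H` via `e`, carries the Hopf algebra structure of the bismash
product `A # H` of the linked pair `(A, H, ▶, ρ)`. -/
structure IsBismash
    (tri : H →ₗ[ℂ] A →ₗ[ℂ] A) (rho : H →ₗ[ℂ] H ⊗[ℂ] A)
    (M : Type) [Ring M] [HopfAlgebra ℂ M] (e : A ⊗[ℂ] H ≃ₗ[ℂ] M) : Prop where
  mul_def : ∀ (a b : A) (x y : H) {ι : Type} (s : Finset ι) (x1 x2 : ι → H),
      Rep2 x s x1 x2 →
      e (a ⊗ₜ[ℂ] x) * e (b ⊗ₜ[ℂ] y)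
        = ∑ i ∈ s, e ((a * tri (x1 i) b) ⊗ₜ[ℂ] (x2 i * y))
  one_def : (1 : M) = e ((1 : A) ⊗ₜ[ℂ] (1 : H))
  comul_def : ∀ (a : A) (x : H) {ι κ : Type} (s : Finset ι) (t : Finset κ)
      (a1 a2 : ι → A) (g : κ → H) (c : κ → A) (u : κ → H),
      Rep2 a s a1 a2 →
      (TensorProduct.map rho (LinearMap.id : H →ₗ[ℂ] H)) (Coalgebra.comul (R := ℂ) x)
        = ∑ j ∈ t, (g j ⊗ₜ[ℂ] c j) ⊗ₜ[ℂ] u j →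
      Coalgebra.comul (R := ℂ) (e (a ⊗ₜ[ℂ] x))
        = ∑ i ∈ s, ∑ j ∈ t, e (a1 i ⊗ₜ[ℂ] g j) ⊗ₜ[ℂ] e ((a2 i * c j) ⊗ₜ[ℂ] u j)
  counit_def : ∀ (a : A) (x : H),
      Coalgebra.counit (R := ℂ) (e (a ⊗ₜ[ℂ] x))
        = Coalgebra.counit (R := ℂ) a * Coalgebra.counit (R := ℂ) x

end LinkedPair


/-! Writing `(ρ ⊗ id) Δx = ∑ (x₁)_H ⊗ (x₁)_A ⊗ x₂`, right invariance of `φ_H` and `ρ(1) = 1 ⊗ 1`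
give `∑ φ_H(x₂) (x₁)_H ⊗ (x₁)_A = φ_H(x) 1 ⊗ 1`, and this collapses
`(id ⊗ Φ) Δ(a # x) = ∑ φ_A(a₂ (x₁)_A) φ_H(x₂) a₁ # (x₁)_H` to `Φ(a # x) 1`: `Φ` is a right integral.
In any Hopf algebra a normalised right integral `φ` is also a left integral: `φ ∘ S` is a left
integral because `S` is anti-comultiplicative, and evaluating `∑ φ(S x₁) φ(x₂)` in two ways shows
`φ ∘ S = φ`. Left invariance of `Φ` at `1 # x`, followed by `id ⊗ ε`, is then exactly
`∑ φ_H(x_H) x_A = φ_H(x) 1`. -/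

open TensorProduct WithConv

namespace HopfAlgebra

variable {R C : Type*} [CommSemiring R] [Semiring C] [HopfAlgebra R C]

lemma algHom_comp_antipode_mul_algHom {B : Type*} [Semiring B] [Algebra R B] (f : C →ₐ[R] B) :
    toConv (f.toLinearMap ∘ₗ antipode R) * toConv f.toLinearMap = 1 := by
  have h := LinearMap.algHom_comp_convMul_distrib f (toConv (antipode R)) (toConv LinearMap.id)
  rw [LinearMap.antipode_mul_id, LinearMap.comp_id] at h
  apply WithConv.ofConv_injective
  rw [← h]
  ext x
  simp

lemma algHom_mul_algHom_comp_antipode {B : Type*} [Semiring B] [Algebra R B] (f : C →ₐ[R] B) :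
    toConv f.toLinearMap * toConv (f.toLinearMap ∘ₗ antipode R) = 1 := by
  have h := LinearMap.algHom_comp_convMul_distrib f (toConv LinearMap.id) (toConv (antipode R))
  rw [LinearMap.id_mul_antipode, LinearMap.comp_id] at h
  apply WithConv.ofConv_injective
  rw [← h]
  ext x
  simp

theorem comul_comp_antipode :
    comul ∘ₗ antipode R =
      map (antipode R) (antipode R) ∘ₗ (TensorProduct.comm R C C).toLinearMap ∘ₗ comul := by
  set G := map (antipode R) (antipode R) ∘ₗ (TensorProduct.comm R C C).toLinearMap ∘ₗ comul
  set ι₁ := (Algebra.TensorProduct.includeLeft : C →ₐ[R] C ⊗[R] C)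
  set ι₂ := (Algebra.TensorProduct.includeRight : C →ₐ[R] C ⊗[R] C)
  -- In the convolution algebra `Δ = ι₁ * ι₂` with `ι₁, ι₂` algebra maps, so `G` is a left
  -- inverse of `Δ`; `Δ` is itself an algebra map, so `Δ ∘ S` is a right inverse.
  have hcomul : toConv (comul : C →ₗ[R] C ⊗[R] C) =
      toConv ι₁.toLinearMap * toConv ι₂.toLinearMap := by
    ext x
    rw [(ℛ R x).convMul_apply, ofConv_toConv, ← (ℛ R x).eq]
    simp [ι₁, ι₂]
  have hG : toConv G = toConv (ι₂.toLinearMap ∘ₗ antipode R) *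
      toConv (ι₁.toLinearMap ∘ₗ antipode R) := by
    ext x
    rw [(ℛ R x).convMul_apply, ofConv_toConv, LinearMap.comp_apply, LinearMap.comp_apply,
      ← (ℛ R x).eq]
    simp [ι₁, ι₂]
  have hleft : toConv G * toConv comul = 1 := by
    rw [hG, hcomul, mul_assoc, ← mul_assoc (toConv (ι₁.toLinearMap ∘ₗ antipode R)),
      algHom_comp_antipode_mul_algHom, one_mul, algHom_comp_antipode_mul_algHom]
  have hright := algHom_mul_algHom_comp_antipode (Bialgebra.comulAlgHom R C)
  exact WithConv.toConv_injective (left_inv_eq_right_inv hleft hright).symm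

end HopfAlgebra

section Integral

variable {R C : Type*} [CommSemiring R] [Semiring C] [Bialgebra R C] {φ : C →ₗ[R] R}

def IsLeftIntegral (φ : C →ₗ[R] R) : Prop :=
  ∀ x : C, TensorProduct.lid R C (φ.rTensor C (comul x)) = φ x • 1

def IsRightIntegral (φ : C →ₗ[R] R) : Prop :=
  ∀ x : C, TensorProduct.rid R C (φ.lTensor C (comul x)) = φ x • 1

lemma IsLeftIntegral.sum_smul (hφ : IsLeftIntegral φ) {x : C} {ι : Type*} {s : Finset ι}
    {l r : ι → C} (hx : comul x = ∑ i ∈ s, l i ⊗ₜ[R] r i) :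
    ∑ i ∈ s, φ (l i) • r i = φ x • 1 := by
  simpa [hx, map_sum] using hφ x

lemma IsRightIntegral.sum_smul (hφ : IsRightIntegral φ) {x : C} {ι : Type*} {s : Finset ι}
    {l r : ι → C} (hx : comul x = ∑ i ∈ s, l i ⊗ₜ[R] r i) :
    ∑ i ∈ s, φ (r i) • l i = φ x • 1 := by
  simpa [hx, map_sum] using hφ x

end Integral

section HopfIntegral

open HopfAlgebra

variable {R C : Type*} [CommSemiring R] [Semiring C] [HopfAlgebra R C] {φ : C →ₗ[R] R}

lemma IsRightIntegral.isLeftIntegral_comp_antipode (hφ : IsRightIntegral φ) :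
    IsLeftIntegral (φ ∘ₗ antipode R) := by
  set ψ := φ ∘ₗ antipode R
  have hψS : toConv (Algebra.linearMap R C ∘ₗ ψ) * toConv (antipode R) =
      toConv (Algebra.linearMap R C ∘ₗ ψ) := by
    ext x
    have hS : comul (antipode R x) =
        ∑ i ∈ (ℛ R x).index, antipode R ((ℛ R x).right i) ⊗ₜ[R] antipode R ((ℛ R x).left i) := by
      rw [← LinearMap.comp_apply, comul_comp_antipode, LinearMap.comp_apply, LinearMap.comp_apply,
        ← (ℛ R x).eq]
      simp [map_sum]
    rw [(ℛ R x).convMul_apply]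
    simpa [ψ, Algebra.smul_def] using hφ.sum_smul hS
  have hψ : toConv (Algebra.linearMap R C ∘ₗ ψ) * toConv LinearMap.id =
      toConv (Algebra.linearMap R C ∘ₗ ψ) := by
    rw [← hψS, mul_assoc, LinearMap.antipode_mul_id, mul_one, hψS]
  intro x
  have := congr($hψ x)
  rw [(ℛ R x).convMul_apply] at this
  simpa [← (ℛ R x).eq, map_sum, Algebra.smul_def] using this

theorem IsRightIntegral.isLeftIntegral (hφ : IsRightIntegral φ) (h1 : φ 1 = 1) :
    IsLeftIntegral φ := by
  set ψ := φ ∘ₗ antipode R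
  have hψ : IsLeftIntegral ψ := hφ.isLeftIntegral_comp_antipode
  have hψ1 : ψ 1 = 1 := by simp [ψ, antipode_one, h1]
  suffices φ = ψ from this ▸ hψ
  ext x
  let 𝓡 := ℛ R x
  calc φ x = ψ (φ x • 1) := by rw [map_smul, hψ1, smul_eq_mul, mul_one]
    _ = ∑ i ∈ 𝓡.index, φ (𝓡.right i) * ψ (𝓡.left i) := by
      rw [← hφ.sum_smul 𝓡.eq.symm, map_sum]; simp
    _ = φ (∑ i ∈ 𝓡.index, ψ (𝓡.left i) • 𝓡.right i) := by
      rw [map_sum]; simp [mul_comm]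
    _ = ψ x := by rw [hψ.sum_smul 𝓡.eq.symm, map_smul, h1, smul_eq_mul, mul_one]

end HopfIntegral

lemma isNormalIntegral_iff {N : Type} [Ring N] [HopfAlgebra ℂ N] {φ : N →ₗ[ℂ] ℂ} :
    IsNormalIntegral N φ ↔ φ 1 = 1 ∧ IsLeftIntegral φ ∧ IsRightIntegral φ := by
  refine ⟨fun ⟨h1, hl, hr⟩ => ⟨h1, fun x => ?_, fun x => ?_⟩,
    fun ⟨h1, hl, hr⟩ => ⟨h1, fun x _ _ _ _ hx => hl.sum_smul hx,
      fun x _ _ _ _ hx => hr.sum_smul hx⟩⟩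
  · simpa [← (ℛ ℂ x).eq, map_sum] using hl x _ _ _ (ℛ ℂ x).eq.symm
  · simpa [← (ℛ ℂ x).eq, map_sum] using hr x _ _ _ (ℛ ℂ x).eq.symm

lemma exists_sum_tmul_tmul {R M₁ M₂ M₃ : Type} [CommSemiring R] [AddCommMonoid M₁] [Module R M₁]
    [AddCommMonoid M₂] [Module R M₂] [AddCommMonoid M₃] [Module R M₃]
    (w : (M₁ ⊗[R] M₂) ⊗[R] M₃) :
    ∃ (ι : Type) (t : Finset ι) (g : ι → M₁) (c : ι → M₂) (u : ι → M₃),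
      w = ∑ j ∈ t, (g j ⊗ₜ[R] c j) ⊗ₜ[R] u j := by
  classical
  obtain ⟨S, rfl⟩ := TensorProduct.exists_finset w
  choose T hT using fun p : (M₁ ⊗[R] M₂) × M₃ => TensorProduct.exists_finset (R := R) p.1
  refine ⟨_, S.sigma T, fun j => j.2.1, fun j => j.2.2, fun j => j.1.2, ?_⟩
  rw [Finset.sum_sigma]
  exact Finset.sum_congr rfl fun p _ => by rw [hT p, TensorProduct.sum_tmul]

lemma sum_smul_eq_of_rTensor_comul_eq {R C V : Type*} [CommSemiring R] [AddCommMonoid C]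
    [Module R C] [Coalgebra R C] [AddCommMonoid V] [Module R V]
    (f : C →ₗ[R] V) (χ : C →ₗ[R] R) {x : C} {ι : Type*} {t : Finset ι} {v : ι → V} {u : ι → C}
    (hw : f.rTensor C (comul x) = ∑ j ∈ t, v j ⊗ₜ[R] u j) :
    ∑ j ∈ t, χ (u j) • v j = f (TensorProduct.rid R C (χ.lTensor C (comul x))) := by
  have hnat : (TensorProduct.rid R V).toLinearMap ∘ₗ χ.lTensor V ∘ₗ f.rTensor C =
      f ∘ₗ (TensorProduct.rid R C).toLinearMap ∘ₗ χ.lTensor C :=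
    TensorProduct.ext' fun y z => by simp
  calc ∑ j ∈ t, χ (u j) • v j = TensorProduct.rid R V (χ.lTensor V (f.rTensor C (comul x))) := by
        simp [hw, map_sum]
    _ = _ := congr($hnat (comul x))

section Bismash

variable {A H : Type} [Ring A] [HopfAlgebra ℂ A] [Ring H] [HopfAlgebra ℂ H]
  {M : Type} [Ring M] [HopfAlgebra ℂ M]

def bismashIntegral (φA : A →ₗ[ℂ] ℂ) (φH : H →ₗ[ℂ] ℂ) (e : A ⊗[ℂ] H ≃ₗ[ℂ] M) : M →ₗ[ℂ] ℂ :=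
  LinearMap.mul' ℂ ℂ ∘ₗ TensorProduct.map φA φH ∘ₗ (e.symm : M →ₗ[ℂ] A ⊗[ℂ] H)

@[simp] lemma bismashIntegral_apply (φA : A →ₗ[ℂ] ℂ) (φH : H →ₗ[ℂ] ℂ) (e : A ⊗[ℂ] H ≃ₗ[ℂ] M)
    (a : A) (x : H) : bismashIntegral φA φH e (e (a ⊗ₜ x)) = φA a * φH x := by
  simp [bismashIntegral]

variable {tri : H →ₗ[ℂ] A →ₗ[ℂ] A} {rho : H →ₗ[ℂ] H ⊗[ℂ] A} {e : A ⊗[ℂ] H ≃ₗ[ℂ] M}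
  {φA : A →ₗ[ℂ] ℂ} {φH : H →ₗ[ℂ] ℂ}

lemma IsBismash.isRightIntegral_bismashIntegral_tmul (hM : IsBismash A H tri rho M e)
    (hρ1 : rho 1 = 1 ⊗ₜ 1) (hφA : IsRightIntegral φA) (hφH : IsRightIntegral φH)
    (a : A) (x : H) :
    TensorProduct.rid ℂ M ((bismashIntegral φA φH e).lTensor M (comul (e (a ⊗ₜ x)))) =
      bismashIntegral φA φH e (e (a ⊗ₜ x)) • 1 := by
  obtain ⟨ι, t, g, c, u, hw⟩ := exists_sum_tmul_tmul (rho.rTensor H (comul x))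
  let 𝓐 := ℛ ℂ a
  have hφH' : ∑ j ∈ t, φH (u j) • (g j ⊗ₜ[ℂ] c j) = φH x • (1 ⊗ₜ 1) := by
    rw [sum_smul_eq_of_rTensor_comul_eq rho φH hw, hφH x, map_smul, hρ1]
  -- `T (h ⊗ b) = ∑ φ_A(a₂ b) a₁ # h`, so that the sum to compute is `T` of the left side of `hφH'`
  let L : A →ₗ[ℂ] A :=
    ∑ i ∈ 𝓐.index, (φA ∘ₗ LinearMap.mulLeft ℂ (𝓐.right i)).smulRight (𝓐.left i)
  let T : H ⊗[ℂ] A →ₗ[ℂ] M :=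
    e.toLinearMap ∘ₗ (TensorProduct.comm ℂ H A).toLinearMap ∘ₗ L.lTensor H
  rw [hM.comul_def a x 𝓐.index t 𝓐.left 𝓐.right g c u 𝓐.eq.symm hw]
  calc _ = T (∑ j ∈ t, φH (u j) • (g j ⊗ₜ[ℂ] c j)) := by
        simp [T, L, map_sum, Finset.sum_comm (s := 𝓐.index), TensorProduct.sum_tmul,
          Finset.smul_sum, ← TensorProduct.smul_tmul', smul_smul, mul_comm]
    _ = φH x • e (L 1 ⊗ₜ 1) := by rw [hφH']; simp [T]
    _ = _ := by
        simp [L, hφA.sum_smul 𝓐.eq.symm, hM.one_def, ← TensorProduct.smul_tmul', smul_smul,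
          mul_comm]

lemma IsBismash.isRightIntegral_bismashIntegral (hM : IsBismash A H tri rho M e)
    (hρ1 : rho 1 = 1 ⊗ₜ 1) (hφA : IsRightIntegral φA) (hφH : IsRightIntegral φH) :
    IsRightIntegral (bismashIntegral φA φH e) := by
  intro m
  obtain ⟨w, rfl⟩ := e.surjective m
  induction w using TensorProduct.induction_on with
  | zero => simp
  | tmul a x => exact hM.isRightIntegral_bismashIntegral_tmul hρ1 hφA hφH a x
  | add w₁ w₂ h₁ h₂ => simp only [map_add, h₁, h₂, add_smul]

lemma IsBismash.lid_rTensor_rho (hM : IsBismash A H tri rho M e) (hφA1 : φA 1 = 1)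
    (hΦ : IsLeftIntegral (bismashIntegral φA φH e)) (x : H) :
    TensorProduct.lid ℂ A (φH.rTensor A (rho x)) = φH x • 1 := by
  obtain ⟨ι, t, g, c, u, hw⟩ := exists_sum_tmul_tmul (rho.rTensor H (comul x))
  have hcomul1 : comul (1 : A) = ∑ _i ∈ ({()} : Finset Unit), (1 : A) ⊗ₜ[ℂ] (1 : A) := by
    simp [Algebra.TensorProduct.one_def]
  have hl : ∑ j ∈ t, φH (g j) • e (c j ⊗ₜ u j) = φH x • e (1 ⊗ₜ 1) := by
    have := hΦ (e (1 ⊗ₜ x))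
    rw [hM.comul_def 1 x {()} t _ _ g c u hcomul1 hw, hM.one_def] at this
    simpa [map_sum, hφA1] using this
  have hε : ∑ j ∈ t, φH (g j) • counit (R := ℂ) (u j) • c j = φH x • 1 := by
    simpa [map_sum] using
      congr(TensorProduct.rid ℂ A ((counit (R := ℂ) (A := H)).lTensor A (e.symm $hl)))
  have hρ : ∑ j ∈ t, counit (R := ℂ) (u j) • (g j ⊗ₜ[ℂ] c j) = rho x := by
    simpa using sum_smul_eq_of_rTensor_comul_eq rho counit hw
  rw [← hρ]
  simpa [map_sum, smul_smul, mul_comm] using hε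

end Bismash

/-- Let `(A, H, ▶, ρ)` be a linked pair of bialgebras where `A` and `H` are
cosemisimple with normal integrals `φ_A` and `φ_H`.  Then the bismash product `A # H` is
cosemisimple, `Φ(a # x) = φ_A(a) φ_H(x)` is a normal integral on `A # H`, and
`φ_H : H → ℂ` is a morphism of right `A`-comodules, i.e. `∑ φ_H(x_H) x_A = φ_H(x) 1` for
all `x ∈ H`. -/
theorem bismash_normal_integral
    {A H : Type} [Ring A] [HopfAlgebra ℂ A] [Ring H] [HopfAlgebra ℂ H]
    (tri : H →ₗ[ℂ] A →ₗ[ℂ] A) (rho : H →ₗ[ℂ] H ⊗[ℂ] A)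
    (hlp : IsLinkedPair A H tri rho)
    (φA : A →ₗ[ℂ] ℂ) (hφA : IsNormalIntegral A φA)
    (φH : H →ₗ[ℂ] ℂ) (hφH : IsNormalIntegral H φH)
    (M : Type) [Ring M] [HopfAlgebra ℂ M] (e : A ⊗[ℂ] H ≃ₗ[ℂ] M)
    (hM : IsBismash A H tri rho M e) :
    IsNormalIntegral M
      ((LinearMap.mul' ℂ ℂ) ∘ₗ (TensorProduct.map φA φH) ∘ₗ (e.symm : M →ₗ[ℂ] A ⊗[ℂ] H))
    ∧ (∀ (x : H) {ι : Type} (s : Finset ι) (h : ι → H) (c : ι → A),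
        TRep (rho x) s h c → ∑ i ∈ s, φH (h i) • c i = φH x • (1 : A)) := by
  obtain ⟨hφA1, -, hφAr⟩ := isNormalIntegral_iff.mp hφA
  obtain ⟨hφH1, -, hφHr⟩ := isNormalIntegral_iff.mp hφH
  have hΦr := hM.isRightIntegral_bismashIntegral hlp.compat_one hφAr hφHr
  have hΦ1 : bismashIntegral φA φH e 1 = 1 := by
    rw [hM.one_def, bismashIntegral_apply, hφA1, hφH1, mul_one]
  have hΦl := hΦr.isLeftIntegral hΦ1
  refine ⟨isNormalIntegral_iff.mpr ⟨hΦ1, hΦl, hΦr⟩, fun x ι s h c hx => ?_⟩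
  unfold TRep at hx
  simpa [hx, map_sum] using hM.lid_rTensor_rho hφA1 hΦl x
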